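/- Let $N$ be a Poisson random variable with mean $\lambda$, and let $m$ be a natural number with $m \leq \lambda/4$. Then $\mathbb{P}(N \leq m) \leq e^{-m g(\delta)}$ where $\delta = m/\lambda$ and $g(\delta) = \frac{1}{2} \cdot \frac{1-\delta}{\delta}$. In particular, $\mathbb{P}(N \leq m) \leq \frac{e^{-\lambda}(e\lambda)^m}{m^m}$. -/

import Mathlib

/-!
Chernoff's method: for `0 ≤ t ≤ 1`, `t^m ∑_{k ≤ m} λ^k/k! ≤ ∑_{k ≤ m} (tλ)^k/k! ≤ e^{tλ}`, and
`t = m/λ` gives `∑_{k ≤ m} λ^k/k! ≤ (eλ/m)^m`, which is the second bound. Since `m g(δ) = (λ - m)/2`,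
the first bound reduces to `m log u ≤ m (u - 1)/2` for `u = λ/m ≥ 4`; this holds at `u = 4`
because `log 4 < 3/2`, and beyond it because `log` has slope below `1/2`.
-/

open Finset Real
open scoped Nat

theorem pow_mul_sum_range_pow_div_factorial_le_exp {x t : ℝ} (hx : 0 ≤ x) (ht₀ : 0 ≤ t)
    (ht₁ : t ≤ 1) (m : ℕ) :
    t ^ m * ∑ k ∈ range (m + 1), x ^ k / k ! ≤ exp (t * x) := by
  calc t ^ m * ∑ k ∈ range (m + 1), x ^ k / k !
      ≤ ∑ k ∈ range (m + 1), (t * x) ^ k / k ! := by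
        rw [mul_sum]
        refine sum_le_sum fun k hk => ?_
        have htk : t ^ m ≤ t ^ k :=
          pow_le_pow_of_le_one ht₀ ht₁ (by simpa [Nat.lt_succ_iff] using hk)
        rw [mul_pow, mul_div_assoc]
        exact mul_le_mul_of_nonneg_right htk (by positivity)
    _ ≤ exp (t * x) := sum_le_exp_of_nonneg (mul_nonneg ht₀ hx) _

theorem sum_range_pow_div_factorial_le {x : ℝ} (hx : 0 < x) {m : ℕ} (hm : (m : ℝ) ≤ x) :
    ∑ k ∈ range (m + 1), x ^ k / k ! ≤ (exp 1 * x) ^ m / (m : ℝ) ^ m := by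
  have key := pow_mul_sum_range_pow_div_factorial_le_exp hx.le (div_nonneg m.cast_nonneg hx.le)
    ((div_le_one hx).2 hm) m
  rw [div_mul_cancel₀ _ hx.ne', div_pow, div_mul_eq_mul_div, div_le_iff₀ (pow_pos hx m)] at key
  rw [le_div_iff₀ (by exact_mod_cast Nat.pow_self_pos), mul_pow, ← exp_nat_mul, mul_one]
  linarith

theorem log_le_sub_one_div_two {u : ℝ} (hu : 4 ≤ u) : log u ≤ (u - 1) / 2 := by
  have hquarter : log (u / 4) ≤ u / 4 - 1 := log_le_sub_one_of_pos (by positivity)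
  have hsplit : log u = 2 * log 2 + log (u / 4) := by
    rw [← log_rpow two_pos, ← log_mul (by positivity) (by positivity)]
    norm_num [mul_div_cancel₀]
  linarith [log_two_lt_d9]

theorem exp_neg_mul_pow_div_pow_le {lam : ℝ} {m : ℕ} (hm₀ : 0 < m) (hm : (m : ℝ) ≤ lam / 4) :
    exp (-lam) * (exp 1 * lam) ^ m / (m : ℝ) ^ m ≤ exp (-((lam - m) / 2)) := by
  have hm₀' : (0 : ℝ) < m := by exact_mod_cast hm₀
  set u := lam / m with hu
  have hlam : lam = m * u := by rw [hu, mul_div_cancel₀ _ hm₀'.ne']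
  have hu₄ : 4 ≤ u := by rw [hu, le_div_iff₀ hm₀']; linarith
  have hpow : u ^ m = exp (m * log u) := by rw [exp_nat_mul, exp_log (by positivity)]
  calc exp (-lam) * (exp 1 * lam) ^ m / (m : ℝ) ^ m
      = exp (-lam + m + m * log u) := by
        rw [exp_add, exp_add, ← hpow, mul_pow, ← exp_nat_mul, mul_one, hu, div_pow]
        field_simp
    _ ≤ exp (-((lam - m) / 2)) := by
        gcongr
        linarith [mul_le_mul_of_nonneg_left (log_le_sub_one_div_two hu₄) hm₀'.le]

/-- Chernoff-type lower tail bound for a Poisson random variable `N` with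
mean `λ`: for `m ≤ λ/4`, `P(N ≤ m) ≤ e^{-m g(δ)}` with `δ = m/λ`,
`g(δ) = (1-δ)/(2δ)`, and in particular `P(N ≤ m) ≤ e^{-λ}(eλ)^m / m^m`.
Here `P(N ≤ m) = ∑_{k ≤ m} e^{-λ} λ^k / k!`. -/
theorem poisson_lower_tail (lam : ℝ) (hlam : 0 < lam) (m : ℕ) (hm : (m : ℝ) ≤ lam / 4) :
    (∑ k ∈ Finset.range (m+1), Real.exp (-lam) * lam ^ k / (Nat.factorial k))
        ≤ Real.exp (-((m : ℝ) * ((1 - (m : ℝ)/lam) / (2 * ((m : ℝ)/lam))))) ∧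
    (∑ k ∈ Finset.range (m+1), Real.exp (-lam) * lam ^ k / (Nat.factorial k))
        ≤ Real.exp (-lam) * (Real.exp 1 * lam) ^ m / (m : ℝ) ^ m := by
  have hsum : ∑ k ∈ range (m + 1), exp (-lam) * lam ^ k / k !
      = exp (-lam) * ∑ k ∈ range (m + 1), lam ^ k / k ! := by
    simp only [mul_sum, mul_div_assoc]
  have hbound : ∑ k ∈ range (m + 1), exp (-lam) * lam ^ k / k !
      ≤ exp (-lam) * (exp 1 * lam) ^ m / (m : ℝ) ^ m := by
    rw [hsum, mul_div_assoc]
    exact mul_le_mul_of_nonneg_left (sum_range_pow_div_factorial_le hlam (by linarith))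
      (exp_pos _).le
  refine ⟨?_, hbound⟩
  rcases m.eq_zero_or_pos with rfl | hm₀
  · simpa using hlam.le
  · have hexponent : (m : ℝ) * ((1 - m / lam) / (2 * (m / lam))) = (lam - m) / 2 := by
      field_simp
    rw [hexponent]
    exact hbound.trans (exp_neg_mul_pow_div_pow_le hm₀ hm)
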